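/- Let n ≥ 2, ⟨ρ⟩ := sqrt(1+ρ²), and define the volume density of the n-dimensional Riemannian catenoid in the global radial coordinate by μ(ρ) := |ρ|·⟨ρ⟩^{2n-3}·(⟨ρ⟩^{2(n-1)} − 1)^{-1/2} for ρ ≠ 0. Then: (i) the translation zero mode profile ⟨ρ⟩^{1-n} is square integrable, i.e. ∫_ℝ ⟨ρ⟩^{2(1-n)} μ(ρ) dρ < ∞, if and only if n ≥ 3; and (ii) the axial zero mode profile sqrt(⟨ρ⟩^{2(n-1)} − 1)/⟨ρ⟩^{n-1} is never square integrable: ∫_ℝ (1 − ⟨ρ⟩^{2(1-n)}) μ(ρ) dρ = ∞ for every n ≥ 2. -/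

import Mathlib

open MeasureTheory

section Aux

open Real Set

/-- Explicit form of the first integrand away from `ρ = 0`. -/
private noncomputable def catG (n : ℕ) (ρ : ℝ) : ℝ :=
  |ρ| * ((1 + ρ ^ 2) ^ (n - 1) - 1) ^ (-(1 : ℝ) / 2) * (1 + ρ ^ 2) ^ (-(1 : ℝ) / 2)

private lemma catA_pos (ρ : ℝ) : (0 : ℝ) < 1 + ρ ^ 2 := by positivity

private lemma catA_one_lt {ρ : ℝ} (hρ : ρ ≠ 0) : (1 : ℝ) < 1 + ρ ^ 2 := by
  have : 0 < ρ ^ 2 := by positivity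
  linarith

private lemma catSub_pos {n : ℕ} (hn : 2 ≤ n) {ρ : ℝ} (hρ : ρ ≠ 0) :
    (0 : ℝ) < (1 + ρ ^ 2) ^ (n - 1) - 1 := by
  have h1 : (1 : ℝ) < (1 + ρ ^ 2) ^ (n - 1) :=
    one_lt_pow₀ (catA_one_lt hρ) (by omega)
  linarith

/-- `sqrt A ^ (2*(1-n)) * μ ρ = catG n ρ` for `ρ ≠ 0`. -/
private lemma catG_eq {n : ℕ} (hn : 2 ≤ n) {μ : ℝ → ℝ}
    (hμ : ∀ ρ : ℝ, ρ ≠ 0 →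
      μ ρ = |ρ| * Real.sqrt (1 + ρ ^ 2) ^ (2 * n - 3) *
        (Real.sqrt (1 + ρ ^ 2) ^ (2 * (n - 1)) - 1) ^ (-(1 : ℝ) / 2))
    {ρ : ℝ} (hρ : ρ ≠ 0) :
    Real.sqrt (1 + ρ ^ 2) ^ ((2 : ℝ) * (1 - (n : ℝ))) * μ ρ = catG n ρ := by
  have hA : (0 : ℝ) < 1 + ρ ^ 2 := catA_pos ρ
  have hsq : Real.sqrt (1 + ρ ^ 2) ^ 2 = 1 + ρ ^ 2 := Real.sq_sqrt hA.le
  have hpow : Real.sqrt (1 + ρ ^ 2) ^ (2 * (n - 1)) = (1 + ρ ^ 2) ^ (n - 1) := by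
    rw [pow_mul, hsq]
  have hsqrt : Real.sqrt (1 + ρ ^ 2) = (1 + ρ ^ 2) ^ ((1 : ℝ) / 2) :=
    Real.sqrt_eq_rpow _
  have hodd : Real.sqrt (1 + ρ ^ 2) ^ (2 * n - 3)
      = (1 + ρ ^ 2) ^ (((2 * n - 3 : ℕ) : ℝ) / 2) := by
    rw [hsqrt, ← Real.rpow_natCast ((1 + ρ ^ 2) ^ ((1 : ℝ) / 2)) (2 * n - 3),
      ← Real.rpow_mul hA.le]
    ring_nf
  have hfirst : Real.sqrt (1 + ρ ^ 2) ^ ((2 : ℝ) * (1 - (n : ℝ)))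
      = (1 + ρ ^ 2) ^ ((1 : ℝ) - (n : ℝ)) := by
    rw [hsqrt, ← Real.rpow_mul hA.le]
    ring_nf
  rw [hμ ρ hρ, hpow, hodd, hfirst, catG]
  have hcast : ((2 * n - 3 : ℕ) : ℝ) = 2 * (n : ℝ) - 3 := by
    have : (3 : ℕ) ≤ 2 * n := by omega
    push_cast [Nat.cast_sub this]
    ring
  rw [hcast]
  have hcomb : (1 + ρ ^ 2) ^ ((1 : ℝ) - (n : ℝ)) * (1 + ρ ^ 2) ^ ((2 * (n : ℝ) - 3) / 2)
      = (1 + ρ ^ 2) ^ (-(1 : ℝ) / 2) := by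
    rw [← Real.rpow_add hA]
    ring_nf
  calc (1 + ρ ^ 2) ^ ((1:ℝ) - (n:ℝ)) *
        (|ρ| * (1 + ρ ^ 2) ^ ((2 * (n:ℝ) - 3) / 2) * ((1 + ρ^2) ^ (n-1) - 1) ^ (-(1:ℝ)/2))
      = |ρ| * ((1 + ρ^2) ^ (n-1) - 1) ^ (-(1:ℝ)/2) *
        ((1 + ρ ^ 2) ^ ((1:ℝ) - (n:ℝ)) * (1 + ρ ^ 2) ^ ((2 * (n:ℝ) - 3) / 2)) := by ring
    _ = _ := by rw [hcomb]

private lemma catG_nonneg {n : ℕ} (hn : 2 ≤ n) {ρ : ℝ} (hρ : ρ ≠ 0) : 0 ≤ catG n ρ := by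
  unfold catG
  have h1 : (0:ℝ) < (1 + ρ ^ 2) ^ (n - 1) - 1 := catSub_pos hn hρ
  positivity

private lemma rpow_sq_neg_half {x : ℝ} (hx : 0 < x) : (x ^ 2 : ℝ) ^ (-(1:ℝ)/2) = x⁻¹ := by
  rw [← Real.rpow_natCast x 2, ← Real.rpow_mul hx.le]
  norm_num
  exact Real.rpow_neg_one x

private lemma catG_measurable (n : ℕ) : Measurable (catG n) := by
  unfold catG
  fun_prop

/-- key comparison: `(1+ρ²)^(n-1) - 1 ≥ ρ² (1+ρ²)^(n-2)`. -/
private lemma catSub_ge {n : ℕ} (hn : 2 ≤ n) (ρ : ℝ) :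
    ρ ^ 2 * (1 + ρ ^ 2) ^ (n - 2) ≤ (1 + ρ ^ 2) ^ (n - 1) - 1 := by
  have h1 : (1 + ρ ^ 2) ^ (n - 1) = (1 + ρ ^ 2) ^ (n - 2) * (1 + ρ ^ 2) := by
    rw [← pow_succ]
    congr 1
    omega
  have h2 : (1 : ℝ) ≤ (1 + ρ ^ 2) ^ (n - 2) := one_le_pow₀ (by nlinarith)
  nlinarith

/-- For `n ≥ 3`, `catG n` is dominated by `(1+ρ²)⁻¹` away from `0`. -/
private lemma catG_le {n : ℕ} (hn : 3 ≤ n) {ρ : ℝ} (hρ : ρ ≠ 0) :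
    catG n ρ ≤ (1 + ρ ^ 2)⁻¹ := by
  have hA : (0 : ℝ) < 1 + ρ ^ 2 := catA_pos ρ
  have hρ2 : (0 : ℝ) < ρ ^ 2 := by positivity
  have hB : (0 : ℝ) < ρ ^ 2 * (1 + ρ ^ 2) ^ (n - 2) := by positivity
  have hmono : ((1 + ρ ^ 2) ^ (n - 1) - 1) ^ (-(1:ℝ)/2)
      ≤ (ρ ^ 2 * (1 + ρ ^ 2) ^ (n - 2)) ^ (-(1:ℝ)/2) :=
    Real.rpow_le_rpow_of_nonpos hB (catSub_ge (by omega) ρ) (by norm_num)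
  have hsplit : (ρ ^ 2 * (1 + ρ ^ 2) ^ (n - 2)) ^ (-(1:ℝ)/2)
      = (ρ ^ 2) ^ (-(1:ℝ)/2) * ((1 + ρ ^ 2) ^ (n - 2) : ℝ) ^ (-(1:ℝ)/2) :=
    Real.mul_rpow hρ2.le (by positivity)
  have hρ2pow : (ρ ^ 2 : ℝ) ^ (-(1:ℝ)/2) = |ρ|⁻¹ := by
    rw [← sq_abs]
    exact rpow_sq_neg_half (abs_pos.mpr hρ)
  have habs : (0:ℝ) < |ρ| := abs_pos.mpr hρ
  calc catG n ρ
      ≤ |ρ| * ((ρ ^ 2) ^ (-(1:ℝ)/2) * ((1 + ρ ^ 2) ^ (n - 2) : ℝ) ^ (-(1:ℝ)/2)) *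
          (1 + ρ ^ 2) ^ (-(1:ℝ)/2) := by
        unfold catG
        rw [← hsplit]
        have h3 : (0:ℝ) ≤ (1 + ρ ^ 2) ^ (-(1:ℝ)/2) := Real.rpow_nonneg hA.le _
        apply mul_le_mul_of_nonneg_right _ h3
        exact mul_le_mul_of_nonneg_left hmono (abs_nonneg ρ)
    _ = ((1 + ρ ^ 2) ^ (n - 2) : ℝ) ^ (-(1:ℝ)/2) * (1 + ρ ^ 2) ^ (-(1:ℝ)/2) := by
        rw [hρ2pow]
        field_simp
    _ = (1 + ρ ^ 2) ^ (((n : ℝ) - 2) * (-(1:ℝ)/2) + (-(1:ℝ)/2)) := by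
        rw [← Real.rpow_natCast (1 + ρ ^ 2) (n - 2), ← Real.rpow_mul hA.le,
          ← Real.rpow_add hA]
        congr 2
        have : ((n - 2 : ℕ) : ℝ) = (n : ℝ) - 2 := by
          push_cast [Nat.cast_sub (by omega : 2 ≤ n)]; ring
        rw [this]
    _ ≤ (1 + ρ ^ 2) ^ (-1 : ℝ) := by
        apply Real.rpow_le_rpow_of_exponent_le (by nlinarith)
        have hn' : (3 : ℝ) ≤ (n : ℝ) := by exact_mod_cast hn
        nlinarith
    _ = (1 + ρ ^ 2)⁻¹ := Real.rpow_neg_one _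

private lemma ae_ne_zero : ∀ᵐ ρ : ℝ, ρ ≠ 0 := by
  have : (volume : Measure ℝ) {(0:ℝ)} = 0 := Real.volume_singleton
  rw [MeasureTheory.ae_iff]
  simpa using this

end Aux

/-- Square integrability of the translation zero modes of the catenoid: the transverse
zero mode `⟨ρ⟩^(1-n)` is in `L²` iff `n ≥ 3`, and the axial zero mode is never in `L²`. -/
theorem catenoid_zero_modes_integrability
    (n : ℕ) (hn : 2 ≤ n)
    (μ : ℝ → ℝ)
    (hμ : ∀ ρ : ℝ, ρ ≠ 0 →
      μ ρ = |ρ| * Real.sqrt (1 + ρ ^ 2) ^ (2 * n - 3) *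
        (Real.sqrt (1 + ρ ^ 2) ^ (2 * (n - 1)) - 1) ^ (-(1 : ℝ) / 2)) :
    (Integrable (fun ρ : ℝ =>
        Real.sqrt (1 + ρ ^ 2) ^ ((2 : ℝ) * (1 - (n : ℝ))) * μ ρ) ↔ 3 ≤ n) ∧
    ¬ Integrable (fun ρ : ℝ =>
        (1 - Real.sqrt (1 + ρ ^ 2) ^ ((2 : ℝ) * (1 - (n : ℝ)))) * μ ρ) := by
  have hae : (fun ρ : ℝ =>
      Real.sqrt (1 + ρ ^ 2) ^ ((2 : ℝ) * (1 - (n : ℝ))) * μ ρ) =ᵐ[volume] catG n := by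
    filter_upwards [ae_ne_zero] with ρ hρ
    exact catG_eq hn hμ hρ
  constructor
  · rw [integrable_congr hae]
    constructor
    · -- if integrable then n ≥ 3
      intro hint
      by_contra h3
      have hn2 : n = 2 := by omega
      subst hn2
      -- catG 2 ρ = (1+ρ²)^(-1/2) for ρ ≠ 0; compare with ρ⁻¹ on Ioi 1
      have hIoi : IntegrableOn (catG 2) (Set.Ioi (1:ℝ)) := hint.integrableOn
      have : IntegrableOn (fun ρ : ℝ => ρ ^ (-1 : ℝ)) (Set.Ioi (1:ℝ)) := by
        apply Integrable.mono' (hIoi.const_mul (Real.sqrt 2))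
        · apply Measurable.aestronglyMeasurable
          fun_prop
        · filter_upwards [MeasureTheory.self_mem_ae_restrict measurableSet_Ioi]
            with ρ (hρ : 1 < ρ)
          have hρ0 : (0:ℝ) < ρ := lt_trans one_pos hρ
          have hA : (0 : ℝ) < 1 + ρ ^ 2 := catA_pos ρ
          rw [Real.norm_eq_abs, abs_of_nonneg (Real.rpow_nonneg hρ0.le _)]
          have hval : catG 2 ρ = (1 + ρ ^ 2) ^ (-(1:ℝ)/2) := by
            unfold catG
            rw [show (2-1 : ℕ) = 1 from rfl, pow_one]
            have he : (1 + ρ ^ 2 - 1 : ℝ) = ρ ^ 2 := by ring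
            rw [he, rpow_sq_neg_half hρ0, abs_of_pos hρ0]
            field_simp
          have h1 : (1 + ρ ^ 2 : ℝ) ≤ 2 * ρ ^ 2 := by nlinarith
          have h2 : (1 + ρ ^ 2 : ℝ) ^ (-(1:ℝ)/2) ≥ (2 * ρ ^ 2) ^ (-(1:ℝ)/2) :=
            Real.rpow_le_rpow_of_nonpos hA h1 (by norm_num)
          have h3 : (2 * ρ ^ 2 : ℝ) ^ (-(1:ℝ)/2)
              = (Real.sqrt 2)⁻¹ * ρ ^ (-1 : ℝ) := by
            rw [Real.mul_rpow (by norm_num) (by positivity), rpow_sq_neg_half hρ0,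
              Real.rpow_neg_one]
            congr 1
            rw [show (-(1:ℝ)/2) = -((1:ℝ)/2) by norm_num, Real.rpow_neg (by norm_num),
              ← Real.sqrt_eq_rpow]
          have hs2 : (0:ℝ) < Real.sqrt 2 := Real.sqrt_pos.mpr (by norm_num)
          rw [hval]
          rw [ge_iff_le, h3] at h2
          calc ρ ^ (-1 : ℝ) = Real.sqrt 2 * ((Real.sqrt 2)⁻¹ * ρ ^ (-1 : ℝ)) := by
                field_simp
            _ ≤ Real.sqrt 2 * (1 + ρ ^ 2) ^ (-(1:ℝ)/2) :=
                mul_le_mul_of_nonneg_left h2 hs2.le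
      rw [integrableOn_Ioi_rpow_iff zero_lt_one] at this
      linarith
    · -- n ≥ 3 implies integrable
      intro h3
      apply Integrable.mono' (g := fun ρ : ℝ => (1 + ρ ^ 2)⁻¹) integrable_inv_one_add_sq
        (catG_measurable n).aestronglyMeasurable
      filter_upwards [ae_ne_zero] with ρ hρ
      rw [Real.norm_eq_abs, abs_of_nonneg (catG_nonneg hn hρ)]
      exact catG_le h3 hρ
  · -- axial mode never integrable
    intro hint
    -- integrand ≥ 1/2 on Ioi 1
    have hIoi : IntegrableOn (fun ρ : ℝ =>
        (1 - Real.sqrt (1 + ρ ^ 2) ^ ((2 : ℝ) * (1 - (n : ℝ)))) * μ ρ)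
        (Set.Ioi (1:ℝ)) := hint.integrableOn
    have hconst : IntegrableOn (fun _ : ℝ => (1:ℝ)/2) (Set.Ioi (1:ℝ)) := by
      apply Integrable.mono' hIoi
      · exact aestronglyMeasurable_const
      · filter_upwards [MeasureTheory.self_mem_ae_restrict measurableSet_Ioi]
          with ρ (hρ : 1 < ρ)
        have hρ0 : ρ ≠ 0 := by positivity
        have hρpos : (0:ℝ) < ρ := lt_trans one_pos hρ
        have hA : (0 : ℝ) < 1 + ρ ^ 2 := catA_pos ρ
        have hA2 : (2 : ℝ) ≤ 1 + ρ ^ 2 := by nlinarith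
        have hsqrt : Real.sqrt (1 + ρ ^ 2) = (1 + ρ ^ 2) ^ ((1 : ℝ) / 2) :=
          Real.sqrt_eq_rpow _
        have hfirst : Real.sqrt (1 + ρ ^ 2) ^ ((2 : ℝ) * (1 - (n : ℝ)))
            = (1 + ρ ^ 2) ^ ((1 : ℝ) - (n : ℝ)) := by
          rw [hsqrt, ← Real.rpow_mul hA.le]
          ring_nf
        -- 1 - A^(1-n) ≥ 1/2
        have hup : (1 + ρ ^ 2 : ℝ) ^ ((1 : ℝ) - (n : ℝ)) ≤ 1/2 := by
          have h1 : (1 + ρ ^ 2 : ℝ) ^ ((1 : ℝ) - (n : ℝ)) ≤ (1 + ρ ^ 2) ^ (-1 : ℝ) := by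
            apply Real.rpow_le_rpow_of_exponent_le (by linarith)
            have : (2 : ℝ) ≤ (n : ℝ) := by exact_mod_cast hn
            linarith
          rw [Real.rpow_neg_one] at h1
          have : (1 + ρ ^ 2 : ℝ)⁻¹ ≤ 1/2 := by
            rw [inv_le_comm₀ (by linarith) (by norm_num)]
            linarith
          linarith
        -- μ ρ ≥ 1
        have hμge : (1 : ℝ) ≤ μ ρ := by
          rw [hμ ρ hρ0]
          have hpow : Real.sqrt (1 + ρ ^ 2) ^ (2 * (n - 1)) = (1 + ρ ^ 2) ^ (n - 1) := by
            rw [pow_mul, Real.sq_sqrt hA.le]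
          rw [hpow]
          have hsub : (0 : ℝ) < (1 + ρ ^ 2) ^ (n - 1) - 1 := catSub_pos hn hρ0
          have hle : (1 + ρ ^ 2 : ℝ) ^ (n - 1) - 1 ≤ (1 + ρ ^ 2) ^ (n - 1) := by linarith
          have hmono : ((1 + ρ ^ 2 : ℝ) ^ (n - 1)) ^ (-(1:ℝ)/2)
              ≤ ((1 + ρ ^ 2) ^ (n - 1) - 1) ^ (-(1:ℝ)/2) :=
            Real.rpow_le_rpow_of_nonpos hsub hle (by norm_num)
          have hkey : (1 : ℝ) ≤ |ρ| * Real.sqrt (1 + ρ ^ 2) ^ (2 * n - 3) *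
              ((1 + ρ ^ 2) ^ (n - 1) : ℝ) ^ (-(1:ℝ)/2) := by
            have habs : |ρ| = ρ := abs_of_pos hρpos
            have hodd : Real.sqrt (1 + ρ ^ 2) ^ (2 * n - 3)
                = (1 + ρ ^ 2) ^ (((2 * n - 3 : ℕ) : ℝ) / 2) := by
              rw [hsqrt, ← Real.rpow_natCast ((1 + ρ ^ 2) ^ ((1 : ℝ) / 2)) (2 * n - 3),
                ← Real.rpow_mul hA.le]
              ring_nf
            have hrp : ((1 + ρ ^ 2) ^ (n - 1) : ℝ) ^ (-(1:ℝ)/2)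
                = (1 + ρ ^ 2) ^ (((n : ℝ) - 1) * (-(1:ℝ)/2)) := by
              rw [← Real.rpow_natCast (1 + ρ ^ 2) (n - 1), ← Real.rpow_mul hA.le]
              congr 2
              push_cast [Nat.cast_sub (by omega : 1 ≤ n)]
              ring
            rw [habs, hodd, hrp, mul_assoc, ← Real.rpow_add hA]
            have hcast : ((2 * n - 3 : ℕ) : ℝ) = 2 * (n : ℝ) - 3 := by
              push_cast [Nat.cast_sub (by omega : 3 ≤ 2 * n)]
              ring
            rw [hcast]
            have hexp : (2 * (n : ℝ) - 3) / 2 + ((n : ℝ) - 1) * (-(1:ℝ)/2)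
                = ((n : ℝ) - 2) / 2 := by ring
            rw [hexp]
            have h1 : (1 : ℝ) ≤ (1 + ρ ^ 2) ^ (((n : ℝ) - 2) / 2) := by
              apply Real.one_le_rpow (by linarith)
              have : (2 : ℝ) ≤ (n : ℝ) := by exact_mod_cast hn
              linarith
            nlinarith
          calc (1 : ℝ) ≤ |ρ| * Real.sqrt (1 + ρ ^ 2) ^ (2 * n - 3) *
                ((1 + ρ ^ 2) ^ (n - 1) : ℝ) ^ (-(1:ℝ)/2) := hkey
            _ ≤ |ρ| * Real.sqrt (1 + ρ ^ 2) ^ (2 * n - 3) *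
                ((1 + ρ ^ 2) ^ (n - 1) - 1 : ℝ) ^ (-(1:ℝ)/2) := by
              apply mul_le_mul_of_nonneg_left hmono
              positivity
        rw [hfirst]
        have : (1:ℝ)/2 ≤ (1 - (1 + ρ ^ 2) ^ ((1 : ℝ) - (n : ℝ))) * μ ρ := by
          have h1 : (1:ℝ)/2 ≤ 1 - (1 + ρ ^ 2) ^ ((1 : ℝ) - (n : ℝ)) := by linarith
          calc (1:ℝ)/2 ≤ (1:ℝ)/2 * 1 := by norm_num
            _ ≤ (1 - (1 + ρ ^ 2) ^ ((1 : ℝ) - (n : ℝ))) * μ ρ :=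
              mul_le_mul h1 hμge (by norm_num) (by linarith)
        rw [Real.norm_eq_abs, abs_of_nonneg (by norm_num : (0:ℝ) ≤ (1:ℝ)/2)]
        exact this
    rw [integrableOn_const_iff (C := (1:ℝ)/2)] at hconst
    rcases hconst with h | h
    · norm_num at h
    · simp [Real.volume_Ioi] at h
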